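/- arXiv:2602.06315 — 3 statements merged into one kernel-verified Lean document; each statement's English description precedes it below -/
import Mathlib

section
/- For any real number $a \neq 0$, real number $b$, nonnegative integer $n$, and complex number $s$ with sufficiently large real part, the Mellin-type integral $\int_0^\infty t^s H_n(at+b) e^{-(at+b)^2} \frac{dt}{t}$ equals $a^{-n} \frac{\Gamma(s)}{\Gamma(s-n)} \int_0^\infty t^{s-n} e^{-(at+b)^2} \frac{dt}{t}$, where $H_n$ is the $n$-th (physicists') Hermite polynomial. -/
/-!
Since `H_n(x) e^{-x^2} = (-1)^n φ^{(n)}(x)` for `φ(x) = e^{-x^2}`, the left side is `(-1)^n` times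
the Mellin transform of `t ↦ φ^{(n)}(at + b)`. Integration by parts gives
`M[f'](s) = -(s - 1) M[f](s - 1)`; the boundary terms vanish because every derivative of the
Gaussian is a polynomial times `e^{-x^2}`, hence decays faster than any power of `t`. As
`d/dt φ^{(m)}(at + b) = a φ^{(m+1)}(at + b)`, the `k`-th of the `n` steps contributes
`-(s - k)/a`, and `(s - 1)(s - 2) ⋯ (s - n) = Γ(s)/Γ(s - n)`.
-/

open MeasureTheory Complex

/-- The `n`-th (physicists') Hermite polynomial `H_n(x) = (-1)^n e^{x^2} (d/dx)^n e^{-x^2}`. -/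
noncomputable def hermiteH (n : ℕ) (x : ℝ) : ℝ :=
  (-1) ^ n * Real.exp (x ^ 2) * iteratedDeriv n (fun y => Real.exp (-(y ^ 2))) x

open Filter Topology Set Asymptotics Polynomial

theorem mellin_eq_setIntegral_cpow_mul_div (f : ℝ → ℂ) (s : ℂ) :
    mellin f s = ∫ t in Ioi (0 : ℝ), (t : ℂ) ^ s * (f t / t) := by
  refine setIntegral_congr_fun measurableSet_Ioi fun t (ht : 0 < t) => ?_
  have ht' : (t : ℂ) ≠ 0 := ofReal_ne_zero.2 ht.ne'
  rw [smul_eq_mul, cpow_sub _ _ ht', cpow_one]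
  ring

theorem mellin_deriv_eq_neg_mul {f f' : ℝ → ℂ} {s : ℂ}
    (hderiv : ∀ t ∈ Ioi 0, HasDerivAt f (f' t) t)
    (hf' : MellinConvergent f' s) (hf : MellinConvergent f (s - 1))
    (h_zero : Tendsto (fun t : ℝ => (t : ℂ) ^ (s - 1) * f t) (𝓝[>] 0) (𝓝 0))
    (h_top : Tendsto (fun t : ℝ => (t : ℂ) ^ (s - 1) * f t) atTop (𝓝 0)) :
    mellin f' s = -((s - 1) * mellin f (s - 1)) := by
  have hpow : ∀ t ∈ Ioi (0 : ℝ),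
      HasDerivAt (fun t : ℝ => (t : ℂ) ^ (s - 1)) ((s - 1) * (t : ℂ) ^ (s - 1 - 1)) t :=
    fun t ht => by
      simpa using ((hasDerivAt_id (t : ℂ)).cpow_const (ofReal_mem_slitPlane.2 ht)).comp_ofReal
  have hpow_mul : IntegrableOn
      ((fun t : ℝ => (s - 1) * (t : ℂ) ^ (s - 1 - 1)) * f) (Ioi 0) := by
    refine (hf.const_smul (s - 1)).congr_fun (fun t _ => ?_) measurableSet_Ioi
    simp only [smul_eq_mul, Pi.mul_apply]
    ring
  have hibp := integral_Ioi_mul_deriv_eq_deriv_mul hpow hderiv hf' hpow_mul h_zero h_top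
  simp only [mellin, smul_eq_mul, sub_self, zero_sub] at hibp ⊢
  rw [hibp, ← integral_const_mul]
  congr 2 with t
  ring

section RapidDecay

variable {f : ℝ → ℂ}

theorem mellinConvergent_of_continuous_of_isBigO_rpow_neg (hc : Continuous f)
    (hf : ∀ k : ℕ, f =O[atTop] fun t => t ^ (-(k : ℝ))) {s : ℂ} (hs : 0 < s.re) :
    MellinConvergent f s := by
  obtain ⟨k, hk⟩ := exists_nat_gt s.re
  refine mellinConvergent_of_isBigO_rpow (b := 0) (hc.locallyIntegrable.locallyIntegrableOn _)
    (hf k) hk ?_ hs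
  simpa using ((hc.tendsto 0).mono_left nhdsWithin_le_nhds).isBigO_one ℝ

theorem tendsto_cpow_mul_nhdsGT_zero (hc : Continuous f) {σ : ℂ} (hσ : 0 < σ.re) :
    Tendsto (fun t : ℝ => (t : ℂ) ^ σ * f t) (𝓝[>] 0) (𝓝 0) := by
  have hpow : Tendsto (fun t : ℝ => (t : ℂ) ^ σ) (𝓝 0) (𝓝 0) := by
    simpa [zero_cpow (ne_zero_of_re_pos hσ)] using
      (continuousAt_ofReal_cpow_const 0 σ (Or.inl hσ)).tendsto
  simpa using (hpow.mul (hc.tendsto 0)).mono_left nhdsWithin_le_nhds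

theorem tendsto_cpow_mul_atTop (hf : ∀ k : ℕ, f =O[atTop] fun t => t ^ (-(k : ℝ))) (σ : ℂ) :
    Tendsto (fun t : ℝ => (t : ℂ) ^ σ * f t) atTop (𝓝 0) := by
  obtain ⟨k, hk⟩ := exists_nat_gt σ.re
  have hO : (fun t : ℝ => (t : ℂ) ^ σ * f t) =O[atTop] fun t => t ^ σ.re * t ^ (-(k : ℝ)) := by
    refine IsBigO.mul (IsBigO.of_bound' ?_) (hf k)
    filter_upwards [eventually_gt_atTop 0] with t ht
    rw [norm_cpow_eq_rpow_re_of_pos ht, Real.norm_of_nonneg (by positivity)]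
  refine hO.trans_tendsto ?_
  have hlim := tendsto_rpow_neg_atTop (sub_pos.2 hk)
  refine hlim.congr' ?_
  filter_upwards [eventually_gt_atTop 0] with t ht
  rw [neg_sub, sub_eq_add_neg, Real.rpow_add ht]

end RapidDecay

noncomputable def gaussianDeriv (n : ℕ) : ℝ → ℝ :=
  iteratedDeriv n fun y => Real.exp (-(y ^ 2))

theorem contDiff_exp_neg_sq : ContDiff ℝ ⊤ fun y : ℝ => Real.exp (-(y ^ 2)) := by
  fun_prop

@[fun_prop]
theorem continuous_gaussianDeriv (n : ℕ) : Continuous (gaussianDeriv n) :=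
  contDiff_exp_neg_sq.continuous_iteratedDeriv n (by simp)

theorem hasDerivAt_gaussianDeriv (n : ℕ) (x : ℝ) :
    HasDerivAt (gaussianDeriv n) (gaussianDeriv (n + 1) x) x := by
  unfold gaussianDeriv
  rw [iteratedDeriv_succ]
  exact ((contDiff_exp_neg_sq.differentiable_iteratedDeriv n (by simp)) x).hasDerivAt

theorem exists_gaussianDeriv_eq_eval_mul (n : ℕ) :
    ∃ p : ℝ[X], ∀ x, gaussianDeriv n x = p.eval x * Real.exp (-(x ^ 2)) := by
  induction n with
  | zero => exact ⟨1, fun x => by simp [gaussianDeriv]⟩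
  | succ n ih =>
    obtain ⟨p, hp⟩ := ih
    refine ⟨derivative p - C 2 * X * p, fun x => ?_⟩
    have hderiv := hasDerivAt_gaussianDeriv n x
    rw [funext hp] at hderiv
    refine hderiv.unique (((p.hasDerivAt x).mul (hasDerivAt_pow 2 x).fun_neg.exp).congr_deriv ?_)
    simp only [eval_sub, eval_mul, eval_C, eval_X]
    ring

theorem tendsto_eval_mul_exp_neg_sq_cocompact (p : ℝ[X]) :
    Tendsto (fun x => p.eval x * Real.exp (-(x ^ 2))) (cocompact ℝ) (𝓝 0) := by
  have h_top : ∀ q : ℝ[X], Tendsto (fun x => q.eval x * Real.exp (-(x ^ 2))) atTop (𝓝 0) := by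
    intro q
    refine squeeze_zero_norm' ?_ (by simpa using (q.tendsto_div_exp_atTop).abs)
    filter_upwards [eventually_ge_atTop (1 : ℝ)] with x hx
    rw [norm_mul, Real.norm_eq_abs, Real.norm_eq_abs, Real.abs_exp, abs_div, Real.abs_exp,
      div_eq_mul_inv, ← Real.exp_neg]
    gcongr
    nlinarith
  have h_bot : Tendsto (fun x => p.eval x * Real.exp (-(x ^ 2))) atBot (𝓝 0) := by
    refine ((h_top (p.comp (-X))).comp tendsto_neg_atBot_atTop).congr fun x => ?_
    simp
  rw [cocompact_eq_atBot_atTop]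
  exact h_bot.sup (h_top p)

theorem tendsto_affine_cocompact {a : ℝ} (ha : a ≠ 0) (b : ℝ) :
    Tendsto (fun t => a * t + b) atTop (cocompact ℝ) :=
  ((Homeomorph.mulLeft₀ a ha).trans (Homeomorph.addRight b)).isClosedEmbedding
    |>.tendsto_cocompact.comp atTop_le_cocompact

theorem isBigO_gaussianDeriv_comp_affine {a : ℝ} (ha : a ≠ 0) (b : ℝ) (n k : ℕ) :
    (fun t : ℝ => (gaussianDeriv n (a * t + b) : ℂ)) =O[atTop] fun t => t ^ (-(k : ℝ)) := by
  obtain ⟨p, hp⟩ := exists_gaussianDeriv_eq_eval_mul n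
  have hlim : Tendsto (fun t => t ^ k * gaussianDeriv n (a * t + b)) atTop (𝓝 0) := by
    -- evaluated at `a * t + b`, the polynomial `(a⁻¹ (X - b)) ^ k * p` is `t ^ k * p (a * t + b)`
    refine ((tendsto_eval_mul_exp_neg_sq_cocompact ((C a⁻¹ * (X - C b)) ^ k * p)).comp
      (tendsto_affine_cocompact ha b)).congr fun t => ?_
    have : a⁻¹ * (a * t + b - b) = t := by field_simp; ring
    simp only [Function.comp_apply, eval_mul, eval_pow, eval_sub, eval_C, eval_X, this, hp]
    ring
  have hO := (isBigO_refl (fun t : ℝ => t ^ (-(k : ℝ))) atTop).mul (hlim.isBigO_one ℝ)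
  refine (hO.norm_left.congr' ?_ (by simp)).of_norm_left
  filter_upwards [eventually_gt_atTop 0] with t ht
  rw [norm_real, Real.rpow_neg ht.le, Real.rpow_natCast, inv_mul_cancel_left₀ (by positivity)]

theorem hasDerivAt_gaussianDeriv_comp_affine (a b : ℝ) (n : ℕ) (t : ℝ) :
    HasDerivAt (fun t : ℝ => (gaussianDeriv n (a * t + b) : ℂ))
      ((a : ℂ) * gaussianDeriv (n + 1) (a * t + b)) t := by
  have haff : HasDerivAt (fun t : ℝ => a * t + b) a t := by
    simpa using ((hasDerivAt_id t).const_mul a).add_const b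
  have h := ((hasDerivAt_gaussianDeriv n (a * t + b)).comp t haff).ofReal_comp
  simpa [mul_comm] using h

theorem mellin_gaussianDeriv_comp_affine {a : ℝ} (ha : a ≠ 0) (b : ℝ) (n : ℕ) {s : ℂ}
    (hs : (n : ℝ) < s.re) :
    mellin (fun t : ℝ => (gaussianDeriv n (a * t + b) : ℂ)) s
      = (-(a : ℂ))⁻¹ ^ n * (Gamma s / Gamma (s - n)) *
          mellin (fun t : ℝ => (Real.exp (-(a * t + b) ^ 2) : ℂ)) (s - n) := by
  induction n generalizing s with
  | zero =>
    simp only [CharP.cast_eq_zero, sub_zero, pow_zero, one_mul] at hs ⊢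
    rw [div_self (Gamma_ne_zero_of_re_pos hs), one_mul]
    simp [gaussianDeriv]
  | succ n ih =>
    have hs1 : (n : ℝ) < (s - 1).re := by simp only [sub_re, one_re]; push_cast at hs; linarith
    have hs1_pos : 0 < (s - 1).re := lt_of_le_of_lt n.cast_nonneg hs1
    have hibp := mellin_deriv_eq_neg_mul (fun t _ => hasDerivAt_gaussianDeriv_comp_affine a b n t)
      ((mellinConvergent_of_continuous_of_isBigO_rpow_neg (by fun_prop)
        (isBigO_gaussianDeriv_comp_affine ha b (n + 1)) (by linarith)).const_smul (a : ℂ))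
      (mellinConvergent_of_continuous_of_isBigO_rpow_neg (by fun_prop)
        (isBigO_gaussianDeriv_comp_affine ha b n) hs1_pos)
      (tendsto_cpow_mul_nhdsGT_zero (by fun_prop) hs1_pos)
      (tendsto_cpow_mul_atTop (isBigO_gaussianDeriv_comp_affine ha b n) _)
    have hsmul :=
      mellin_const_smul (fun t : ℝ => (gaussianDeriv (n + 1) (a * t + b) : ℂ)) s (a : ℂ)
    simp only [smul_eq_mul] at hsmul
    rw [hsmul, ih hs1] at hibp
    have hΓ : Gamma s = (s - 1) * Gamma (s - 1) := by
      simpa using Gamma_add_one (s - 1) (ne_zero_of_re_pos hs1_pos)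
    have ha' : (a : ℂ) ≠ 0 := ofReal_ne_zero.2 ha
    rw [show s - ((n + 1 : ℕ) : ℂ) = s - 1 - n by push_cast; ring, hΓ, pow_succ]
    field_simp
    linear_combination hibp

theorem hermiteH_mul_exp_neg_sq (n : ℕ) (x : ℝ) :
    hermiteH n x * Real.exp (-(x ^ 2)) = (-1) ^ n * gaussianDeriv n x := by
  have h : Real.exp (x ^ 2) * Real.exp (-(x ^ 2)) = 1 := by rw [← Real.exp_add]; simp
  change (-1) ^ n * Real.exp (x ^ 2) * gaussianDeriv n x * _ = _
  linear_combination (-1) ^ n * gaussianDeriv n x * h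

theorem stmt_0 (a : ℝ) (ha : a ≠ 0) (b : ℝ) (n : ℕ) (s : ℂ) (hs : (n : ℝ) < s.re) :
    ∫ t in Set.Ioi (0 : ℝ),
        (t : ℂ) ^ s * (hermiteH n (a * t + b) * Real.exp (-(a * t + b) ^ 2) / t)
      = (a : ℂ) ^ (-(n : ℤ)) * (Complex.Gamma s / Complex.Gamma (s - n)) *
          ∫ t in Set.Ioi (0 : ℝ), (t : ℂ) ^ (s - n) * (Real.exp (-(a * t + b) ^ 2) / t) := by
  have hH : ∀ t : ℝ, (hermiteH n (a * t + b) : ℂ) * (Real.exp (-(a * t + b) ^ 2) : ℂ)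
      = (-1 : ℂ) ^ n • (gaussianDeriv n (a * t + b) : ℂ) := fun t => by
    rw [smul_eq_mul]
    exact_mod_cast hermiteH_mul_exp_neg_sq n (a * t + b)
  simp_rw [hH, ← mellin_eq_setIntegral_cpow_mul_div, mellin_const_smul,
    mellin_gaussianDeriv_comp_affine ha b n hs, smul_eq_mul, ← mul_assoc, ← mul_pow]
  rw [← neg_inv, neg_one_mul, neg_neg, zpow_neg, zpow_natCast, inv_pow]
end

section
/- For a nonnegative integer $m$ and a real number $t > 0$, one has $\int_{\mathbb{R}^2} (u_2 + \sqrt{-1}\, u_1)^m e^{-\pi(u_1^2 + u_2^2) - 2\pi\sqrt{-1}\, t u_2}\, du_1\, du_2 = (\sqrt{-1})^{-m} t^m e^{-\pi t^2}$. -/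
/-!
Write `w = u₂ + i u₁` and `G = exp (-π (u₁² + u₂²) - 2π i t u₂)`. The operator `∂₂ + i ∂₁`
annihilates `w` and multiplies `G` by `-2π (w + i t)`. The integral over the plane of a partial
derivative of a rapidly decaying function vanishes, so applying the operator to `w ^ m G` gives
`∫ w ^ (m + 1) G = -i t ∫ w ^ m G`. For `m = 0` the integral is the Fourier transform of the
Gaussian, `exp (-π t²)`.
-/

open MeasureTheory Complex Real

section PartialDerivatives

variable {α β E : Type*} [MeasurableSpace α] [MeasurableSpace β] {μ : Measure α} {ν : Measure β}
  [SFinite μ] [SFinite ν] [NormedAddCommGroup E] [NormedSpace ℝ E]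

theorem integral_prod_eq_zero_of_hasDerivAt_snd {f f' : α × ℝ → E}
    (hderiv : ∀ x y, HasDerivAt (fun y => f (x, y)) (f' (x, y)) y)
    (hf : Integrable f (μ.prod volume)) (hf' : Integrable f' (μ.prod volume)) :
    ∫ p, f' p ∂μ.prod volume = 0 := by
  rw [integral_prod _ hf']
  refine integral_eq_zero_of_ae ?_
  filter_upwards [hf.prod_right_ae, hf'.prod_right_ae] with x hfx hf'x
  exact integral_eq_zero_of_hasDerivAt_of_integrable (hderiv x) hf'x hfx

theorem integral_prod_eq_zero_of_hasDerivAt_fst {f f' : ℝ × β → E}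
    (hderiv : ∀ x y, HasDerivAt (fun x => f (x, y)) (f' (x, y)) x)
    (hf : Integrable f (volume.prod ν)) (hf' : Integrable f' (volume.prod ν)) :
    ∫ p, f' p ∂volume.prod ν = 0 := by
  rw [← integral_prod_swap]
  exact integral_prod_eq_zero_of_hasDerivAt_snd (fun y x => hderiv x y) hf.swap hf'.swap

end PartialDerivatives

theorem integrable_abs_pow_mul_exp_neg_mul_sq {b : ℝ} (hb : 0 < b) (k : ℕ) :
    Integrable fun x : ℝ => |x| ^ k * rexp (-b * x ^ 2) := by
  have hk : (-1 : ℝ) < k := by linarith [k.cast_nonneg (α := ℝ)]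
  refine (integrable_rpow_mul_exp_neg_mul_sq hb hk).norm.congr (ae_of_all _ fun x => ?_)
  simp [rpow_natCast, abs_of_pos (exp_pos _)]

theorem integrable_one_add_abs_pow_mul_exp_neg_mul_sq {b : ℝ} (hb : 0 < b) (k : ℕ) :
    Integrable fun x : ℝ => (1 + |x|) ^ k * rexp (-b * x ^ 2) := by
  simp_rw [add_comm (1 : ℝ), add_pow, one_pow, mul_one, Finset.sum_mul]
  refine integrable_finsetSum _ fun j _ => ?_
  simpa only [mul_left_comm, mul_assoc] using
    (integrable_abs_pow_mul_exp_neg_mul_sq hb j).const_mul (k.choose j : ℝ)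

theorem integral_cexp_neg_pi_mul_sq_add (c d : ℂ) :
    ∫ x : ℝ, cexp (-π * x ^ 2 + c * x + d) = cexp (d + c ^ 2 / (4 * π)) := by
  have hπ : (π : ℂ) ≠ 0 := ofReal_ne_zero.2 pi_ne_zero
  rw [integral_cexp_quadratic (by simpa using pi_pos), neg_neg, div_self hπ, one_cpow, one_mul]
  congr 1
  field_simp
  ring

namespace TwistedGaussian

def w (p : ℝ × ℝ) : ℂ := p.2 + I * p.1

noncomputable def gauss (t : ℝ) (p : ℝ × ℝ) : ℂ :=
  cexp (-(π : ℂ) * ((p.1 : ℂ) ^ 2 + (p.2 : ℂ) ^ 2) - 2 * (π : ℂ) * I * t * p.2)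

variable (t : ℝ)

lemma abs_fst_le_norm_w (p : ℝ × ℝ) : |p.1| ≤ ‖w p‖ := by
  simpa [w] using abs_im_le_norm (w p)

lemma abs_snd_le_norm_w (p : ℝ × ℝ) : |p.2| ≤ ‖w p‖ := by
  simpa [w] using abs_re_le_norm (w p)

lemma norm_w_le (p : ℝ × ℝ) : ‖w p‖ ≤ (1 + |p.1|) * (1 + |p.2|) := by
  have h : ‖w p‖ ≤ |p.2| + |p.1| := by simpa [w] using norm_le_abs_re_add_abs_im (w p)
  nlinarith [abs_nonneg p.1, abs_nonneg p.2, mul_nonneg (abs_nonneg p.1) (abs_nonneg p.2)]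

lemma norm_gauss (p : ℝ × ℝ) : ‖gauss t p‖ = rexp (-π * p.1 ^ 2) * rexp (-π * p.2 ^ 2) := by
  rw [gauss, norm_exp, ← Real.exp_add]
  congr 1
  simp [← ofReal_pow]
  ring

@[fun_prop]
lemma continuous_gauss : Continuous (gauss t) := by
  unfold gauss
  fun_prop

@[fun_prop]
lemma continuous_w : Continuous w := by
  unfold w
  fun_prop

lemma integrable_w_pow_mul_gauss (k : ℕ) :
    Integrable (fun p => w p ^ k * gauss t p) (volume.prod volume) := by
  have hmaj := (integrable_one_add_abs_pow_mul_exp_neg_mul_sq pi_pos k).mul_prod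
    (integrable_one_add_abs_pow_mul_exp_neg_mul_sq pi_pos k)
  refine hmaj.mono' (by fun_prop : Continuous _).aestronglyMeasurable (ae_of_all _ fun p => ?_)
  calc ‖w p ^ k * gauss t p‖ ≤ ((1 + |p.1|) * (1 + |p.2|)) ^ k * ‖gauss t p‖ := by
        rw [norm_mul, norm_pow]; gcongr; exact norm_w_le p
    _ = _ := by rw [norm_gauss, mul_pow]; ring

lemma integrable_fst_mul_w_pow_mul_gauss (k : ℕ) :
    Integrable (fun p : ℝ × ℝ => (p.1 : ℂ) * (w p ^ k * gauss t p)) (volume.prod volume) := by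
  refine (integrable_w_pow_mul_gauss t (k + 1)).mono
    (by fun_prop : Continuous _).aestronglyMeasurable (ae_of_all _ fun p => ?_)
  rw [norm_mul, norm_real, Real.norm_eq_abs, pow_succ', mul_assoc, norm_mul (w p)]
  gcongr
  exact abs_fst_le_norm_w p

lemma integrable_snd_mul_w_pow_mul_gauss (k : ℕ) :
    Integrable (fun p : ℝ × ℝ => (p.2 : ℂ) * (w p ^ k * gauss t p)) (volume.prod volume) := by
  refine (integrable_w_pow_mul_gauss t (k + 1)).mono
    (by fun_prop : Continuous _).aestronglyMeasurable (ae_of_all _ fun p => ?_)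
  rw [norm_mul, norm_real, Real.norm_eq_abs, pow_succ', mul_assoc, norm_mul (w p)]
  gcongr
  exact abs_snd_le_norm_w p

lemma hasDerivAt_w_fst (x y : ℝ) : HasDerivAt (fun x => w (x, y)) I x := by
  simpa [w] using ((hasDerivAt_id x).ofReal_comp.const_mul I).const_add (y : ℂ)

lemma hasDerivAt_w_snd (x y : ℝ) : HasDerivAt (fun y => w (x, y)) 1 y := by
  simpa [w] using (hasDerivAt_id y).ofReal_comp.add_const (I * x)

lemma hasDerivAt_gauss_fst (x y : ℝ) :
    HasDerivAt (fun x => gauss t (x, y)) (-2 * π * x * gauss t (x, y)) x := by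
  have h : HasDerivAt (fun z : ℂ => -(π : ℂ) * (z ^ 2 + (y : ℂ) ^ 2) - 2 * π * I * t * y)
      (-2 * π * x : ℂ) x := by
    refine (((hasDerivAt_pow 2 (x : ℂ)).add_const ((y : ℂ) ^ 2)).const_mul (-(π : ℂ))).sub_const
      (2 * π * I * t * y) |>.congr_deriv ?_
    push_cast
    ring
  exact h.cexp.comp_ofReal.congr_deriv (mul_comm _ _)

lemma hasDerivAt_gauss_snd (x y : ℝ) :
    HasDerivAt (fun y => gauss t (x, y)) (-2 * π * (y + I * t) * gauss t (x, y)) y := by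
  have h : HasDerivAt (fun z : ℂ => -(π : ℂ) * ((x : ℂ) ^ 2 + z ^ 2) - 2 * π * I * t * z)
      (-2 * π * (y + I * t) : ℂ) y := by
    refine (((hasDerivAt_pow 2 (y : ℂ)).const_add ((x : ℂ) ^ 2)).const_mul (-(π : ℂ))).fun_sub
      ((hasDerivAt_id' (y : ℂ)).const_mul (2 * π * I * t)) |>.congr_deriv ?_
    push_cast
    ring
  exact h.cexp.comp_ofReal.congr_deriv (mul_comm _ _)

theorem integral_w_pow_succ_mul_gauss (m : ℕ) :
    ∫ p, w p ^ (m + 1) * gauss t p ∂volume.prod volume =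
      -(I * t) * ∫ p, w p ^ m * gauss t p ∂volume.prod volume := by
  set F : ℝ × ℝ → ℂ := fun p => w p ^ m * gauss t p
  set Dfst : ℝ × ℝ → ℂ := fun p =>
    m * w p ^ (m - 1) * I * gauss t p + w p ^ m * (-2 * π * p.1 * gauss t p)
  set Dsnd : ℝ × ℝ → ℂ := fun p =>
    m * w p ^ (m - 1) * 1 * gauss t p + w p ^ m * (-2 * π * (p.2 + I * t) * gauss t p)
  have hF : Integrable F (volume.prod volume) := integrable_w_pow_mul_gauss t m
  have hDfst : Integrable Dfst (volume.prod volume) :=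
    (((integrable_w_pow_mul_gauss t (m - 1)).const_mul (m * I)).add
      ((integrable_fst_mul_w_pow_mul_gauss t m).const_mul (-2 * π))).congr
      (ae_of_all _ fun p => by simp only [Dfst, Pi.add_apply]; ring)
  have hDsnd : Integrable Dsnd (volume.prod volume) :=
    ((((integrable_w_pow_mul_gauss t (m - 1)).const_mul m).add
      ((integrable_snd_mul_w_pow_mul_gauss t m).const_mul (-2 * π))).add
      ((integrable_w_pow_mul_gauss t m).const_mul (-2 * π * I * t))).congr
      (ae_of_all _ fun p => by simp only [Dsnd, Pi.add_apply]; ring)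
  have hfst : ∫ p, Dfst p ∂volume.prod volume = 0 :=
    integral_prod_eq_zero_of_hasDerivAt_fst
      (fun x y => ((hasDerivAt_w_fst x y).pow m).mul (hasDerivAt_gauss_fst t x y)) hF hDfst
  have hsnd : ∫ p, Dsnd p ∂volume.prod volume = 0 :=
    integral_prod_eq_zero_of_hasDerivAt_snd
      (fun x y => ((hasDerivAt_w_snd x y).pow m).mul (hasDerivAt_gauss_snd t x y)) hF hDsnd
  have hcomb : ∀ p, Dsnd p + I * Dfst p =
      -2 * π * (w p ^ (m + 1) * gauss t p + I * t * F p) := fun p => by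
    have hw : w p = p.2 + I * p.1 := rfl
    simp only [Dsnd, Dfst, F, pow_succ]
    linear_combination (m * w p ^ (m - 1) * gauss t p) * I_mul_I +
      (2 * π * w p ^ m * gauss t p) * hw
  have hsum : ∫ p, (w p ^ (m + 1) * gauss t p + I * t * F p) ∂volume.prod volume = 0 := by
    have h := integral_add hDsnd (hDfst.const_mul I)
    rw [integral_const_mul, hfst, hsnd, mul_zero, add_zero] at h
    simp_rw [hcomb, integral_const_mul] at h
    exact (mul_eq_zero.1 h).resolve_left (by simp [pi_ne_zero])
  rw [integral_add (integrable_w_pow_mul_gauss t (m + 1)) (hF.const_mul _),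
    integral_const_mul] at hsum
  linear_combination hsum

theorem integral_gauss : ∫ p, gauss t p ∂volume.prod volume = cexp (-π * t ^ 2) := by
  have hinner (x : ℝ) : ∫ y : ℝ, gauss t (x, y) = cexp (-π * x ^ 2 + 0 * x + -π * t ^ 2) := by
    calc ∫ y : ℝ, gauss t (x, y)
        = ∫ y : ℝ, cexp (-π * y ^ 2 + (-2 * π * I * t) * y + -π * x ^ 2) := by
          congr 1 with y
          rw [gauss]
          ring_nf
      _ = cexp (-π * x ^ 2 + 0 * x + -π * t ^ 2) := by
          rw [integral_cexp_neg_pi_mul_sq_add]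
          congr 1
          field_simp
          linear_combination (4 * π * t ^ 2 : ℂ) * I_mul_I
  rw [integral_prod _ (by simpa using integrable_w_pow_mul_gauss t 0)]
  simp_rw [hinner, integral_cexp_neg_pi_mul_sq_add]
  simp

theorem integral_w_pow_mul_gauss (m : ℕ) :
    ∫ p, w p ^ m * gauss t p ∂volume.prod volume = (-(I * t)) ^ m * cexp (-π * t ^ 2) := by
  induction m with
  | zero => simpa using integral_gauss t
  | succ m ih => rw [integral_w_pow_succ_mul_gauss, ih, pow_succ]; ring

end TwistedGaussian

theorem stmt_5_general (m : ℕ) (t : ℝ) :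
    ∫ u₁ : ℝ, ∫ u₂ : ℝ, ((u₂ : ℂ) + Complex.I * u₁) ^ m *
        Complex.exp (-(Real.pi : ℂ) * ((u₁ : ℂ) ^ 2 + (u₂ : ℂ) ^ 2) -
          2 * (Real.pi : ℂ) * Complex.I * t * u₂)
      = Complex.I ^ (-(m : ℤ)) * (t : ℂ) ^ m * Real.exp (-Real.pi * t ^ 2) := by
  have h := TwistedGaussian.integral_w_pow_mul_gauss t m
  rw [integral_prod _ (TwistedGaussian.integrable_w_pow_mul_gauss t m)] at h
  refine h.trans ?_
  rw [zpow_neg, zpow_natCast, ← inv_pow, inv_I, ← mul_pow, ofReal_exp]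
  push_cast
  ring

theorem stmt_5 (m : ℕ) (t : ℝ) (ht : 0 < t) :
    ∫ u₁ : ℝ, ∫ u₂ : ℝ, ((u₂ : ℂ) + Complex.I * u₁) ^ m *
        Complex.exp (-(Real.pi : ℂ) * ((u₁ : ℂ) ^ 2 + (u₂ : ℂ) ^ 2) -
          2 * (Real.pi : ℂ) * Complex.I * t * u₂)
      = Complex.I ^ (-(m : ℤ)) * (t : ℂ) ^ m * Real.exp (-Real.pi * t ^ 2) :=
  stmt_5_general m t
end

section
/- Let $t_1, t_2, a_2 > 0$ be real and $n$ a nonnegative integer. Then $\int_{\mathbb{R}} (t_2^{-1}a_2 + \sqrt{-1}\, t_1^{-1}t_2^{-1}a_2 u)^n\, e^{-\pi t_1^{-2}t_2^{-2}a_2^2 u^2 - 2\pi\sqrt{-1}\,u}\, du = (4\pi)^{-n/2}\, t_1 t_2 a_2^{-1}\, H_n\!\left(\pi^{1/2}(t_2^{-1}a_2 + t_1 t_2 a_2^{-1})\right) e^{-\pi t_1^2 t_2^2 a_2^{-2}}$, where $H_n$ is the $n$-th Hermite polynomial. -/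
/-!
With `b = a₂ / t₂` and `c = a₂ / (t₁ t₂)` the integral is the moment
`I_n = ∫ (b + i c u)^n e^{-π c² u² - 2π i u} du`. The derivative of `(b + i c u)^k` times the
Gaussian factor integrates to zero over `ℝ`, which gives the three-term recurrence
`I_{k+1} = (b + c⁻¹) I_k - k / (2π) I_{k-1}`. Via `H_{k+1}(x) = 2x H_k(x) - 2k H_{k-1}(x)` the
right-hand side satisfies the same recurrence, and both agree at `n = 0` by the Fourier transform
of the Gaussian.
-/

open MeasureTheory

open Real

theorem eq_of_second_order_recurrence {α : Type*} {f g : ℕ → α} (Φ : ℕ → α → α → α)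
    (hf : ∀ n, f (n + 1) = Φ n (f n) (f (n - 1))) (hg : ∀ n, g (n + 1) = Φ n (g n) (g (n - 1)))
    (h0 : f 0 = g 0) : f = g := by
  funext n
  induction n using Nat.strong_induction_on with
  | _ n ih =>
    rcases n with _ | n
    · exact h0
    · rw [hf, hg, ih n (by omega), ih (n - 1) (by omega)]

theorem iteratedDeriv_id_mul {𝕜 : Type*} [NontriviallyNormedField 𝕜] {g : 𝕜 → 𝕜} {n : ℕ}
    (hg : ContDiff 𝕜 n g) (x : 𝕜) :
    iteratedDeriv n (fun y => y * g y) x =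
      x * iteratedDeriv n g x + n * iteratedDeriv (n - 1) g x := by
  rw [iteratedDeriv_fun_mul (f := fun y => y) contDiff_id.contDiffAt hg.contDiffAt]
  rcases n with _ | n
  · simp
  · rw [Finset.sum_range_succ', Finset.sum_range_succ']
    simp [iteratedDeriv_fun_id, add_comm]

theorem deriv_exp_neg_sq :
    deriv (fun y : ℝ => exp (-(y ^ 2))) = fun y => -2 * (y * exp (-(y ^ 2))) := by
  funext y
  rw [((hasDerivAt_pow 2 y).fun_neg.exp).deriv]
  ring

theorem hermiteH_zero (x : ℝ) : hermiteH 0 x = 1 := by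
  simp [hermiteH, ← exp_add]

theorem hermiteH_succ (n : ℕ) (x : ℝ) :
    hermiteH (n + 1) x = 2 * x * hermiteH n x - 2 * n * hermiteH (n - 1) x := by
  have hg : ContDiff ℝ n (fun y : ℝ => exp (-(y ^ 2))) := by fun_prop
  have hderiv : iteratedDeriv (n + 1) (fun y : ℝ => exp (-(y ^ 2))) x =
      -2 * (x * iteratedDeriv n (fun y : ℝ => exp (-(y ^ 2))) x +
        n * iteratedDeriv (n - 1) (fun y : ℝ => exp (-(y ^ 2))) x) := by
    rw [iteratedDeriv_succ', deriv_exp_neg_sq, iteratedDeriv_const_mul_field,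
      iteratedDeriv_id_mul hg]
  rcases n with _ | n
  · simp only [hermiteH, hderiv]
    push_cast
    ring
  · simp only [hermiteH, hderiv, Nat.add_sub_cancel]
    push_cast
    ring

noncomputable def gaussFactor (c u : ℝ) : ℂ :=
  Complex.exp (-(π : ℂ) * c ^ 2 * u ^ 2 - 2 * π * Complex.I * u)

noncomputable def gaussMoment (b c : ℝ) (k : ℕ) : ℂ :=
  ∫ u : ℝ, ((b : ℂ) + Complex.I * c * u) ^ k * gaussFactor c u

theorem norm_gaussFactor (c u : ℝ) : ‖gaussFactor c u‖ = exp (-(π * c ^ 2) * u ^ 2) := by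
  rw [gaussFactor, Complex.norm_exp]
  congr 1
  simp [Complex.sub_re, Complex.mul_re, pow_two]

theorem continuous_gaussFactor (c : ℝ) : Continuous (gaussFactor c) := by
  unfold gaussFactor; fun_prop

theorem integrable_pow_mul_gaussFactor {c : ℝ} (hc : c ≠ 0) (m : ℕ) :
    Integrable (fun u : ℝ => (u : ℂ) ^ m * gaussFactor c u) := by
  have hreal : Integrable (fun u : ℝ => u ^ m * exp (-(π * c ^ 2) * u ^ 2)) := by
    simpa only [rpow_natCast] using
      integrable_rpow_mul_exp_neg_mul_sq (by positivity) (s := m)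
        (by linarith [m.cast_nonneg (α := ℝ)])
  refine hreal.congr'
    ((Complex.continuous_ofReal.pow m).mul (continuous_gaussFactor c)).aestronglyMeasurable
    (Filter.Eventually.of_forall fun u => ?_)
  rw [norm_mul, norm_mul, norm_pow, norm_pow, norm_gaussFactor, Complex.norm_real,
    norm_of_nonneg (exp_pos _).le]

theorem integrable_eval_mul_gaussFactor {c : ℝ} (hc : c ≠ 0) (p : Polynomial ℂ) :
    Integrable (fun u : ℝ => p.eval (u : ℂ) * gaussFactor c u) := by
  induction p using Polynomial.induction_on' with
  | add p q hp hq => simpa only [Polynomial.eval_add, add_mul] using hp.fun_add hq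
  | monomial m a =>
    simpa only [Polynomial.eval_monomial, mul_assoc] using
      (integrable_pow_mul_gaussFactor hc m).const_mul a

theorem integrable_gaussMoment_integrand {b c : ℝ} (hc : c ≠ 0) (k : ℕ) :
    Integrable (fun u : ℝ => ((b : ℂ) + Complex.I * c * u) ^ k * gaussFactor c u) := by
  convert integrable_eval_mul_gaussFactor hc
    ((Polynomial.C (b : ℂ) + Polynomial.C (Complex.I * c) * Polynomial.X) ^ k) using 3
  simp

theorem hasDerivAt_gaussFactor (c u : ℝ) :
    HasDerivAt (gaussFactor c) (-2 * π * (c ^ 2 * u + Complex.I) * gaussFactor c u) u := by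
  have hid := (hasDerivAt_id u).ofReal_comp
  have hexponent : HasDerivAt (fun x : ℝ => -(π : ℂ) * c ^ 2 * x ^ 2 - 2 * π * Complex.I * x)
      (-2 * π * (c ^ 2 * u + Complex.I)) u :=
    (((hid.pow 2).const_mul (-(π : ℂ) * c ^ 2)).sub (hid.const_mul (2 * π * Complex.I))).congr_deriv
      (by simp only [id]; push_cast; ring)
  exact hexponent.cexp.congr_deriv (mul_comm _ _)

theorem hasDerivAt_pow_mul_gaussFactor (b c : ℝ) (k : ℕ) (u : ℝ) :
    HasDerivAt (fun u : ℝ => ((b : ℂ) + Complex.I * c * u) ^ k * gaussFactor c u)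
      (k * (Complex.I * c) * (((b : ℂ) + Complex.I * c * u) ^ (k - 1) * gaussFactor c u)
        + 2 * π * Complex.I * c * (((b : ℂ) + Complex.I * c * u) ^ (k + 1) * gaussFactor c u)
        - 2 * π * Complex.I * (c * b + 1) * (((b : ℂ) + Complex.I * c * u) ^ k * gaussFactor c u)) u := by
  have hlin : HasDerivAt (fun u : ℝ => (b : ℂ) + Complex.I * c * u) (Complex.I * c) u := by
    simpa using (((hasDerivAt_id u).ofReal_comp).const_mul (Complex.I * c)).const_add (b : ℂ)
  refine ((hlin.pow k).mul (hasDerivAt_gaussFactor c u)).congr_deriv ?_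
  simp only [Pi.pow_apply, pow_succ]
  linear_combination (-2 * π * c ^ 2 * u * ((b : ℂ) + Complex.I * c * u) ^ k * gaussFactor c u) *
    Complex.I_sq

-- At `k = 0` the truncated `k - 1` is harmless: its coefficient `k` vanishes.
theorem gaussMoment_succ (b : ℝ) {c : ℝ} (hc : c ≠ 0) (k : ℕ) :
    gaussMoment b c (k + 1) =
      ((b + c⁻¹ : ℝ) : ℂ) * gaussMoment b c k - k / (2 * π) * gaussMoment b c (k - 1) := by
  have hint := integrable_gaussMoment_integrand (b := b) hc
  have hA := (hint (k - 1)).const_mul (k * (Complex.I * c))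
  have hB := (hint (k + 1)).const_mul (2 * π * Complex.I * c)
  have hC := (hint k).const_mul (2 * π * Complex.I * (c * b + 1))
  have hzero := integral_eq_zero_of_hasDerivAt_of_integrable
    (hasDerivAt_pow_mul_gaussFactor b c k) ((hA.fun_add hB).sub hC) (hint k)
  rw [integral_sub (hA.fun_add hB) hC, integral_add hA hB,
    integral_const_mul, integral_const_mul, integral_const_mul] at hzero
  have hrec : (k * c * gaussMoment b c (k - 1) + 2 * π * c * gaussMoment b c (k + 1)
      - 2 * π * (c * b + 1) * gaussMoment b c k) * Complex.I = 0 := by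
    rw [← hzero, gaussMoment, gaussMoment, gaussMoment]
    ring
  have hcC : (c : ℂ) ≠ 0 := Complex.ofReal_ne_zero.mpr hc
  push_cast
  field_simp
  linear_combination (mul_eq_zero.mp hrec).resolve_right Complex.I_ne_zero

theorem gaussMoment_zero (b : ℝ) {c : ℝ} (hc : 0 < c) :
    gaussMoment b c 0 = ((c⁻¹ * exp (-π * c⁻¹ ^ 2) : ℝ) : ℂ) := by
  have hcC : (c : ℂ) ≠ 0 := Complex.ofReal_ne_zero.mpr hc.ne'
  have hre : (-(π : ℂ) * c ^ 2).re < 0 := by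
    rw [← Complex.ofReal_pow, ← Complex.ofReal_neg, ← Complex.ofReal_mul, Complex.ofReal_re]
    nlinarith [pi_pos, sq_pos_of_pos hc]
  have hsqrt : ((π : ℂ) / -(-π * c ^ 2)) ^ (1 / 2 : ℂ) = (c : ℂ)⁻¹ := by
    rw [show (π : ℂ) / -(-π * c ^ 2) = (c : ℂ)⁻¹ ^ 2 by field_simp, one_div,
      Complex.sq_cpow_two_inv (by simpa using hc)]
  have h := integral_cexp_quadratic hre (-2 * π * Complex.I) 0
  simp only [gaussMoment, gaussFactor, pow_zero, one_mul]
  convert h using 1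
  · congr 1; funext u; ring_nf
  · rw [hsqrt]
    push_cast
    congr 2
    field_simp
    linear_combination (-4 * π) * Complex.I_sq

theorem hermiteH_scaled_succ {s : ℝ} (hs : s ≠ 0) (x : ℝ) (n : ℕ) :
    (2 * s)⁻¹ ^ (n + 1) * hermiteH (n + 1) (s * x) =
      x * ((2 * s)⁻¹ ^ n * hermiteH n (s * x))
        - n / (2 * s ^ 2) * ((2 * s)⁻¹ ^ (n - 1) * hermiteH (n - 1) (s * x)) := by
  rw [hermiteH_succ]
  rcases n with _ | n
  · simp only [zero_add, pow_one, pow_zero, CharP.cast_eq_zero]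
    field_simp
    ring
  · rw [Nat.add_sub_cancel, pow_succ, pow_succ]
    field_simp

theorem gaussMoment_eq (b : ℝ) {c : ℝ} (hc : 0 < c) (n : ℕ) :
    gaussMoment b c n = ((2 * √π)⁻¹ ^ n * c⁻¹ * hermiteH n (√π * (b + c⁻¹))
      * exp (-π * c⁻¹ ^ 2) : ℝ) := by
  have hs : √π ≠ 0 := (sqrt_pos.mpr pi_pos).ne'
  have hclosed (k : ℕ) := congrArg (fun r : ℝ => (r * (c⁻¹ * exp (-π * c⁻¹ ^ 2)) : ℂ))
    (hermiteH_scaled_succ hs (b + c⁻¹) k)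
  refine congrFun (eq_of_second_order_recurrence (g := fun k => (((2 * √π)⁻¹ ^ k * c⁻¹ *
      hermiteH k (√π * (b + c⁻¹)) * exp (-π * c⁻¹ ^ 2) : ℝ) : ℂ))
    (fun k y z => ((b + c⁻¹ : ℝ) : ℂ) * y - k / (2 * π) * z)
    (gaussMoment_succ b hc.ne') (fun k => ?_) ?_) n
  · simp only [sq_sqrt pi_pos.le] at hclosed
    push_cast at hclosed ⊢
    linear_combination hclosed k
  · simp [gaussMoment_zero b hc, hermiteH_zero]

theorem ofReal_four_mul_pi_cpow_neg_div_two (n : ℕ) :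
    ((4 * π : ℝ) : ℂ) ^ (-(n : ℂ) / 2) = (((2 * √π)⁻¹ ^ n : ℝ) : ℂ) := by
  have h4π : (0 : ℝ) ≤ 4 * π := by positivity
  have hsqrt : √(4 * π) = 2 * √π := by
    rw [sqrt_mul (by norm_num), show (4 : ℝ) = 2 ^ 2 by norm_num, sqrt_sq (by norm_num)]
  rw [show -(n : ℂ) / 2 = ((-(n / 2) : ℝ) : ℂ) by push_cast; ring, ← Complex.ofReal_cpow h4π,
    ← hsqrt, sqrt_eq_rpow, ← rpow_natCast, ← rpow_neg_one, ← rpow_mul h4π, ← rpow_mul h4π]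
  congr 2
  ring

theorem stmt_13 (t₁ t₂ a₂ : ℝ) (h₁ : 0 < t₁) (h₂ : 0 < t₂) (h₃ : 0 < a₂) (n : ℕ) :
    ∫ u : ℝ, (((t₂⁻¹ * a₂ : ℝ) : ℂ) + Complex.I * ((t₁⁻¹ * t₂⁻¹ * a₂ * u : ℝ) : ℂ)) ^ n *
        Complex.exp (-(Real.pi : ℂ) * ((t₁⁻¹ ^ 2 * t₂⁻¹ ^ 2 * a₂ ^ 2 * u ^ 2 : ℝ) : ℂ) -
          2 * (Real.pi : ℂ) * Complex.I * (u : ℂ))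
      = ((4 * Real.pi : ℝ) : ℂ) ^ (-(n : ℂ) / 2) * ((t₁ * t₂ * a₂⁻¹ : ℝ) : ℂ) *
          hermiteH n (Real.sqrt Real.pi * (t₂⁻¹ * a₂ + t₁ * t₂ * a₂⁻¹)) *
          Real.exp (-Real.pi * (t₁ ^ 2 * t₂ ^ 2 * a₂⁻¹ ^ 2)) := by
  have hc : 0 < t₁⁻¹ * t₂⁻¹ * a₂ := by positivity
  have hcinv : (t₁⁻¹ * t₂⁻¹ * a₂)⁻¹ = t₁ * t₂ * a₂⁻¹ := by rw [mul_inv, mul_inv, inv_inv, inv_inv]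
  calc _ = gaussMoment (t₂⁻¹ * a₂) (t₁⁻¹ * t₂⁻¹ * a₂) n := by
        unfold gaussMoment gaussFactor
        congr 1
        funext u
        push_cast
        ring_nf
    _ = _ := by
        rw [gaussMoment_eq _ hc, ofReal_four_mul_pi_cpow_neg_div_two, hcinv]
        simp only [mul_pow]
        push_cast
        ring
end
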